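/- arXiv:2111.07196 — 2 statements merged into one kernel-verified Lean document; each statement's English description precedes it below -/
import Mathlib

section
/- For φ ∈ (0, π), the function B_s(φ)/sin φ is strictly increasing; indeed (B_s⁴/sin⁴φ)′ = 6(3−cos φ)(1−cos φ)³/sin⁵φ > 0. -/
open Real Set

noncomputable def Bs (φ : ℝ) : ℝ :=
  ((1 - Real.cos φ) ^ 2 * (7 - 4 * Real.cos φ + Real.cos φ ^ 2)) ^ ((1 : ℝ) / 4)

/-!
Since `Bs φ ≥ 0` and `sin φ > 0` on `(0, π)`, it suffices that `(Bs φ / sin φ) ^ 4`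
increases strictly. This is the explicit function `(1 - cos φ) ^ 2 (7 - 4 cos φ + cos² φ) / sin⁴ φ`,
whose derivative `6 (3 - cos φ) (1 - cos φ) ^ 3 / sin⁵ φ` is positive there because `cos φ < 1`.
-/

lemma StrictMonoOn.of_pow_left {α R : Type*} [Preorder α] [Semiring R] [LinearOrder R]
    [IsStrictOrderedRing R] {f : α → R} {s : Set α} {n : ℕ} (hf : ∀ x ∈ s, 0 ≤ f x)
    (h : StrictMonoOn (fun x => f x ^ n) s) : StrictMonoOn f s :=
  fun _ hx _ hy hxy => lt_of_pow_lt_pow_left₀ n (hf _ hy) (h hx hy hxy)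

lemma Bs_radicand_nonneg (φ : ℝ) :
    0 ≤ (1 - cos φ) ^ 2 * (7 - 4 * cos φ + cos φ ^ 2) := by
  nlinarith [sq_nonneg (1 - cos φ), sq_nonneg (cos φ - 2)]

lemma Bs_nonneg (φ : ℝ) : 0 ≤ Bs φ :=
  rpow_nonneg (Bs_radicand_nonneg φ) _

lemma Bs_pow_four (φ : ℝ) :
    Bs φ ^ 4 = (1 - cos φ) ^ 2 * (7 - 4 * cos φ + cos φ ^ 2) := by
  rw [Bs, ← rpow_natCast, ← rpow_mul (Bs_radicand_nonneg φ)]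
  norm_num

lemma hasDerivAt_Bs_pow_four_div_sin_pow_four {φ : ℝ} (hs : sin φ ≠ 0) :
    HasDerivAt (fun x => Bs x ^ 4 / sin x ^ 4)
      (6 * (3 - cos φ) * (1 - cos φ) ^ 3 / sin φ ^ 5) φ := by
  simp only [Bs_pow_four]
  have hc := hasDerivAt_cos φ
  have hnum := ((hc.const_sub 1).pow 2).mul (((hc.const_mul 4).const_sub 7).add (hc.pow 2))
  refine (hnum.div ((hasDerivAt_sin φ).pow 4) (pow_ne_zero 4 hs)).congr_deriv ?_
  simp only [Pi.pow_apply, Pi.mul_apply, Pi.add_apply]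
  field_simp
  linear_combination sin φ ^ 3 * (2 * (1 - cos φ) * (7 - 4 * cos φ + cos φ ^ 2) +
    (1 - cos φ) ^ 2 * (4 - 2 * cos φ)) * sin_sq_add_cos_sq φ

theorem Bs_div_sin_strictMono :
    StrictMonoOn (fun φ => Bs φ / Real.sin φ) (Ioo 0 π) ∧
      ∀ φ ∈ Ioo (0 : ℝ) π,
        deriv (fun x => Bs x ^ 4 / Real.sin x ^ 4) φ =
          6 * (3 - Real.cos φ) * (1 - Real.cos φ) ^ 3 / Real.sin φ ^ 5 ∧
        0 < deriv (fun x => Bs x ^ 4 / Real.sin x ^ 4) φ := by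
  have hsin : ∀ φ ∈ Ioo 0 π, 0 < sin φ := fun φ hφ => sin_pos_of_pos_of_lt_pi hφ.1 hφ.2
  have hderiv : ∀ φ ∈ Ioo 0 π, HasDerivAt (fun x => Bs x ^ 4 / sin x ^ 4)
      (6 * (3 - cos φ) * (1 - cos φ) ^ 3 / sin φ ^ 5) φ :=
    fun φ hφ => hasDerivAt_Bs_pow_four_div_sin_pow_four (hsin φ hφ).ne'
  have hpos : ∀ φ ∈ Ioo 0 π, 0 < 6 * (3 - cos φ) * (1 - cos φ) ^ 3 / sin φ ^ 5 := by
    intro φ hφ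
    have hcos : cos φ < 1 := by simpa using cos_lt_cos_of_nonneg_of_le_pi le_rfl hφ.2.le hφ.1
    exact div_pos (mul_pos (mul_pos (by norm_num) (by linarith)) (pow_pos (by linarith) 3))
      (pow_pos (hsin φ hφ) 5)
  have hformula : ∀ φ ∈ Ioo (0 : ℝ) π,
      deriv (fun x => Bs x ^ 4 / sin x ^ 4) φ = 6 * (3 - cos φ) * (1 - cos φ) ^ 3 / sin φ ^ 5 ∧
        0 < deriv (fun x => Bs x ^ 4 / sin x ^ 4) φ :=
    fun φ hφ => by rw [(hderiv φ hφ).deriv]; exact ⟨rfl, hpos φ hφ⟩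
  refine ⟨StrictMonoOn.of_pow_left (n := 4) (fun φ hφ => div_nonneg (Bs_nonneg φ) (hsin φ hφ).le)
    ?_, hformula⟩
  simp only [div_pow]
  refine strictMonoOn_of_deriv_pos (convex_Ioo 0 π)
    (fun φ hφ => (hderiv φ hφ).continuousAt.continuousWithinAt) fun φ hφ => ?_
  rw [interior_Ioo] at hφ
  exact (hformula φ hφ).2
end

section
/- Define D(φ) = sin(β(φ))·e^{−iπ/3}, B(φ) = Re D(φ), C(φ) = −Im D(φ), where β is the regular branch of arccos(1+(cos φ−1)e^{2πi/3}) with β(0)=0. Then as φ → 0⁺, D(φ) = φ + φ³(1/48 − i√3/16) + o(φ³); hence B(φ) = φ + φ³/48 + o(φ³) and C(φ) = (√3/16)φ³ + o(φ³). -/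
open Real Set Filter Topology Asymptotics

/-!
With `ω = exp (2πi/3)` and `u = 1 - cos φ`, the relation `cos β = 1 - u ω` and
`exp (-πi/3) ^ 2 * ω = 1` give the branch-free identity `D² = 2u - ω u²`. By the Taylor
expansion of `cos` this equals `P²` up to `O(φ⁶)`, where `P = φ - (ω/8 + 1/24) φ³` is the
claimed cubic. Finally `D - P = (D² - P²) / (D + P)`, and `Im β > 0` forces `Re D > 0`,
so `‖D + P‖ ≥ Re P ≥ φ` and `D - P = o(φ³)`.
-/

namespace Complex

theorem sin_re (z : ℂ) : (sin z).re = Real.sin z.re * Real.cosh z.im := by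
  rw [sin_eq]; simp [← ofReal_sin, ← ofReal_cos, ← ofReal_cosh, ← ofReal_sinh]

theorem sin_im (z : ℂ) : (sin z).im = Real.cos z.re * Real.sinh z.im := by
  rw [sin_eq]; simp [← ofReal_sin, ← ofReal_cos, ← ofReal_cosh, ← ofReal_sinh]

theorem cos_im (z : ℂ) : (cos z).im = -(Real.sin z.re * Real.sinh z.im) := by
  rw [cos_eq]; simp [← ofReal_sin, ← ofReal_cos, ← ofReal_cosh, ← ofReal_sinh]

theorem exp_sub_sum_range_isBigO {n : ℕ} (hn : 0 < n) :
    (fun z : ℂ => exp z - ∑ m ∈ Finset.range n, z ^ m / m.factorial) =O[𝓝 0]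
      fun z => z ^ n := by
  refine IsBigO.of_bound (n.succ * (n.factorial * n : ℝ)⁻¹) ?_
  filter_upwards [Metric.closedBall_mem_nhds (0 : ℂ) one_pos] with z hz
  rw [norm_pow, mul_comm]
  exact exp_bound (by simpa using hz) hn

theorem cos_sub_taylor_isBigO :
    (fun z : ℂ => cos z - (1 - z ^ 2 / 2 + z ^ 4 / 24)) =O[𝓝 0] fun z => z ^ 6 := by
  set E : ℂ → ℂ := fun w => exp w - ∑ m ∈ Finset.range 6, w ^ m / m.factorial
  have hE (c : ℂ) (hc : ‖c‖ = 1) : (fun z => E (z * c)) =O[𝓝 0] fun z : ℂ => z ^ 6 := by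
    have hlim : Tendsto (fun z : ℂ => z * c) (𝓝 0) (𝓝 0) := by
      simpa using (tendsto_id (x := 𝓝 (0 : ℂ))).mul_const c
    refine ((exp_sub_sum_range_isBigO (by norm_num)).comp_tendsto hlim).trans ?_
    exact isBigO_of_le _ fun z => by simp [mul_pow, hc]
  have hcos : (fun z : ℂ => cos z - (1 - z ^ 2 / 2 + z ^ 4 / 24))
      = fun z => (E (z * I) + E (z * -I)) / 2 := by
    funext z
    simp only [E, cos, Finset.sum_range_succ, Finset.sum_range_zero, Nat.factorial]
    push_cast
    ring_nf
    rw [I_sq, I_pow_four]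
    ring
  rw [hcos]
  exact ((hE I (by simp)).add (hE (-I) (by simp))).const_mul_left (1 / 2) |>.congr_left
    fun z => by ring

/-- The cubic coefficient `-(ω/8 + 1/24)` is the one that cancels the `z⁴` terms. -/
theorem two_mul_one_sub_cos_sub_sq_isBigO (ω : ℂ) :
    (fun z : ℂ => 2 * (1 - cos z) - ω * (1 - cos z) ^ 2 - (z - (ω / 8 + 1 / 24) * z ^ 3) ^ 2)
      =O[𝓝 0] fun z => z ^ 6 := by
  set r : ℂ → ℂ := fun z => cos z - (1 - z ^ 2 / 2 + z ^ 4 / 24)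
  have hpoly : (fun z : ℂ => z ^ 6 * (ω / 24 - ω * z ^ 2 / 576 - (ω / 8 + 1 / 24) ^ 2))
      =O[𝓝 0] fun z => z ^ 6 := by
    simpa using (isBigO_refl (fun z : ℂ => z ^ 6) _).mul
      ((by fun_prop : Continuous fun z : ℂ => ω / 24 - ω * z ^ 2 / 576 - (ω / 8 + 1 / 24) ^ 2)
        |>.tendsto 0 |>.isBigO_one ℂ)
  have hrem : (fun z : ℂ => r z * (2 - 2 * ω * (z ^ 2 / 2 - z ^ 4 / 24) + ω * r z))
      =O[𝓝 0] fun z => z ^ 6 := by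
    have hbdd : Continuous fun z : ℂ => 2 - 2 * ω * (z ^ 2 / 2 - z ^ 4 / 24) + ω * r z := by
      fun_prop
    simpa using cos_sub_taylor_isBigO.mul (hbdd.tendsto 0 |>.isBigO_one ℂ)
  refine (hpoly.sub hrem).congr_left fun z => ?_
  simp only [r]
  ring

theorem sq_sin_mul_eq_of_cos_eq {z c ω ε : ℂ} (hε : ε ^ 2 * ω = 1)
    (h : cos z = 1 + (c - 1) * ω) : (sin z * ε) ^ 2 = 2 * (1 - c) - ω * (1 - c) ^ 2 := by
  linear_combination ε ^ 2 * sin_sq_add_cos_sq z - ε ^ 2 * (cos z + 1 + (c - 1) * ω) * h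
    + (1 - c) * (2 - (1 - c) * ω) * hε

theorem exp_two_pi_mul_I_div_three : exp (2 * π * I / 3) = -1 / 2 + √3 / 2 * I := by
  rw [show 2 * π * I / 3 = ((π - π / 3 : ℝ) : ℂ) * I by push_cast; ring, exp_ofReal_mul_I,
    Real.cos_pi_sub, Real.sin_pi_sub, cos_pi_div_three, sin_pi_div_three]
  push_cast
  ring

theorem exp_neg_pi_mul_I_div_three : exp (-(π * I) / 3) = 1 / 2 - √3 / 2 * I := by
  rw [show -(π * I) / 3 = ((-(π / 3) : ℝ) : ℂ) * I by push_cast; ring, exp_ofReal_mul_I,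
    Real.cos_neg, Real.sin_neg, cos_pi_div_three, sin_pi_div_three]
  push_cast
  ring

theorem exp_neg_pi_mul_I_div_three_sq_mul :
    exp (-(π * I) / 3) ^ 2 * exp (2 * π * I / 3) = 1 := by
  rw [← exp_nat_mul, ← exp_add]
  ring_nf
  exact exp_zero

theorem re_sin_mul_exp_neg_pi_mul_I_div_three_pos {z : ℂ}
    (hre : z.re ∈ Ioo (-(π / 2)) (π / 2)) (him : 0 < z.im) (hcos : (cos z).im < 0) :
    0 < (sin z * exp (-(π * I) / 3)).re := by
  have hsinh : 0 < Real.sinh z.im := Real.sinh_pos_iff.mpr him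
  have hsin : 0 < Real.sin z.re := by
    rw [cos_im] at hcos
    exact pos_of_mul_pos_left (neg_neg_iff_pos.mp hcos) hsinh.le
  have hcos_re : 0 < Real.cos z.re := Real.cos_pos_of_mem_Ioo hre
  have hre_mul (w : ℂ) : (w * (1 / 2 - √3 / 2 * I)).re = w.re / 2 + √3 / 2 * w.im := by
    simp [div_eq_mul_inv, mul_comm]
  rw [exp_neg_pi_mul_I_div_three, hre_mul, sin_re, sin_im]
  positivity

theorem re_cubic_taylor (φ : ℝ) :
    ((φ : ℂ) + (φ : ℂ) ^ 3 * (1 / 48 - I * (√3 / 16))).re = φ + φ ^ 3 / 48 := by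
  simp [← ofReal_pow, div_eq_mul_inv]

theorem im_cubic_taylor (φ : ℝ) :
    ((φ : ℂ) + (φ : ℂ) ^ 3 * (1 / 48 - I * (√3 / 16))).im = -(√3 / 16 * φ ^ 3) := by
  simp [← ofReal_pow, div_eq_mul_inv, mul_comm]

end Complex

theorem Asymptotics.IsLittleO.sub_of_sq_sub {α 𝕜 : Type*} [NormedField 𝕜] {l : Filter α}
    {f g : α → 𝕜} {a b : α → ℝ} (hlow : ∀ᶠ x in l, 0 < a x ∧ a x ≤ ‖f x + g x‖)
    (h : (fun x => f x ^ 2 - g x ^ 2) =o[l] fun x => a x * b x) :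
    (fun x => f x - g x) =o[l] b := by
  refine IsLittleO.of_bound fun ε hε => ?_
  filter_upwards [hlow, h.bound hε] with x ⟨ha, hle⟩ hx
  rw [norm_mul, Real.norm_of_nonneg ha.le, show f x ^ 2 - g x ^ 2 = (f x - g x) * (f x + g x) by
    ring, norm_mul] at hx
  refine le_of_mul_le_mul_right ?_ ha
  calc ‖f x - g x‖ * a x ≤ ‖f x - g x‖ * ‖f x + g x‖ := by gcongr
    _ ≤ ε * (a x * ‖b x‖) := hx
    _ = ε * ‖b x‖ * a x := by ring

open Complex in
theorem sq_sin_mul_exp_sub_sq_cubic_taylor_isLittleO {β : ℝ → ℂ}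
    (hcos : ∀ᶠ φ in 𝓝[>] 0, cos (β φ) = 1 + ((Real.cos φ : ℂ) - 1) * exp (2 * π * I / 3)) :
    (fun φ : ℝ => (sin (β φ) * exp (-(π * I) / 3)) ^ 2
      - ((φ : ℂ) + (φ : ℂ) ^ 3 * (1 / 48 - I * (√3 / 16))) ^ 2) =o[𝓝[>] 0]
        fun φ => φ * φ ^ 3 := by
  set ω := exp (2 * π * I / 3) with hω
  have hcubic (φ : ℝ) : (φ : ℂ) + (φ : ℂ) ^ 3 * (1 / 48 - I * (√3 / 16))
      = φ - (ω / 8 + 1 / 24) * (φ : ℂ) ^ 3 := by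
    rw [hω, exp_two_pi_mul_I_div_three]
    ring
  have hO := ((two_mul_one_sub_cos_sub_sq_isBigO ω).comp_tendsto
    (continuous_ofReal.tendsto' 0 0 ofReal_zero)).trans
      (isBigO_of_le (𝓝 (0 : ℝ)) (g := fun φ : ℝ => φ ^ 6) fun φ => by simp)
  refine (hO.mono nhdsWithin_le_nhds).congr' ?_ EventuallyEq.rfl |>.trans_isLittleO ?_
  · filter_upwards [hcos] with φ hφ
    rw [Function.comp_apply, sq_sin_mul_eq_of_cos_eq exp_neg_pi_mul_I_div_three_sq_mul hφ,
      hcubic, ofReal_cos]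
  · exact (isLittleO_pow_pow (by norm_num : 4 < 6)).mono nhdsWithin_le_nhds
      |>.congr_right fun φ => by ring

open Complex in
theorem eventually_re_sin_mul_exp_pos {β : ℝ → ℂ} (hβ : Tendsto β (𝓝[>] 0) (𝓝 0))
    (hcos : ∀ᶠ φ in 𝓝[>] 0, cos (β φ) = 1 + ((Real.cos φ : ℂ) - 1) * exp (2 * π * I / 3))
    (him : ∀ᶠ φ in 𝓝[>] 0, 0 < (β φ).im) :
    ∀ᶠ φ in 𝓝[>] 0, 0 < (sin (β φ) * exp (-(π * I) / 3)).re := by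
  have hre : ∀ᶠ φ in 𝓝[>] 0, (β φ).re ∈ Ioo (-(π / 2)) (π / 2) :=
    ((continuous_re.tendsto 0).comp hβ).eventually
      (Ioo_mem_nhds (by simp [pi_pos]) (by simp [pi_pos]))
  filter_upwards [hre, him, hcos, Ioo_mem_nhdsGT pi_pos] with φ hφre hφim hφcos hφ
  have hcos_lt : Real.cos φ < 1 := by
    simpa using Real.cos_lt_cos_of_nonneg_of_le_pi le_rfl hφ.2.le hφ.1
  have hcos_im : (1 + ((Real.cos φ : ℂ) - 1) * exp (2 * π * I / 3)).im
      = (Real.cos φ - 1) * (√3 / 2) := by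
    simp [exp_two_pi_mul_I_div_three, cos_ofReal_re]
  refine re_sin_mul_exp_neg_pi_mul_I_div_three_pos hφre hφim ?_
  rw [hφcos, hcos_im]
  exact mul_neg_of_neg_of_pos (by linarith) (by positivity)

open Complex in
theorem sin_mul_exp_sub_cubic_taylor_isLittleO {β : ℝ → ℂ} (hβ : Tendsto β (𝓝[>] 0) (𝓝 0))
    (hcos : ∀ᶠ φ in 𝓝[>] 0, cos (β φ) = 1 + ((Real.cos φ : ℂ) - 1) * exp (2 * π * I / 3))
    (him : ∀ᶠ φ in 𝓝[>] 0, 0 < (β φ).im) :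
    (fun φ : ℝ => sin (β φ) * exp (-(π * I) / 3) -
        ((φ : ℂ) + (φ : ℂ) ^ 3 * (1 / 48 - I * (√3 / 16))))
      =o[𝓝[>] 0] fun φ : ℝ => φ ^ 3 := by
  refine (sq_sin_mul_exp_sub_sq_cubic_taylor_isLittleO hcos).sub_of_sq_sub ?_
  filter_upwards [eventually_re_sin_mul_exp_pos hβ hcos him, self_mem_nhdsWithin]
    with φ hre (hφ : 0 < φ)
  refine ⟨hφ, le_trans ?_ (re_le_norm _)⟩
  rw [add_re, re_cubic_taylor]
  linarith [pow_pos hφ 3]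

theorem D_taylor_at_zero (β : ℝ → ℂ)
    (hβ0 : β 0 = 0)
    (hcont : ContinuousOn β (Icc 0 π))
    (hcos : ∀ φ ∈ Icc (0 : ℝ) π, Complex.cos (β φ) =
      1 + ((Real.cos φ : ℂ) - 1) * Complex.exp (2 * Real.pi * Complex.I / 3))
    (him : ∀ φ ∈ Ioo (0 : ℝ) π, 0 < (β φ).im) :
    (fun φ : ℝ => Complex.sin (β φ) * Complex.exp (-(Real.pi * Complex.I) / 3) -
        ((φ : ℂ) + (φ : ℂ) ^ 3 * (1 / 48 - Complex.I * (Real.sqrt 3 / 16))))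
      =o[𝓝[>] 0] (fun φ : ℝ => φ ^ 3) ∧
    (fun φ : ℝ =>
        (Complex.sin (β φ) * Complex.exp (-(Real.pi * Complex.I) / 3)).re -
          (φ + φ ^ 3 / 48))
      =o[𝓝[>] 0] (fun φ : ℝ => φ ^ 3) ∧
    (fun φ : ℝ =>
        (-(Complex.sin (β φ) * Complex.exp (-(Real.pi * Complex.I) / 3)).im) -
          Real.sqrt 3 / 16 * φ ^ 3)
      =o[𝓝[>] 0] (fun φ : ℝ => φ ^ 3) := by
  have hβ : Tendsto β (𝓝[>] 0) (𝓝 0) := hβ0 ▸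
    (hcont 0 ⟨le_rfl, pi_pos.le⟩).mono_of_mem_nhdsWithin (Icc_mem_nhdsGT pi_pos)
  have hIoo : ∀ᶠ φ in 𝓝[>] 0, φ ∈ Ioo 0 π := Ioo_mem_nhdsGT pi_pos
  have hD := sin_mul_exp_sub_cubic_taylor_isLittleO hβ
    (hIoo.mono fun φ hφ => hcos φ (Ioo_subset_Icc_self hφ)) (hIoo.mono him)
  refine ⟨hD, ?_, ?_⟩
  · refine (Complex.reCLM.isBigO_comp _ _ |>.trans_isLittleO hD).congr_left fun φ => ?_
    rw [Complex.reCLM_apply, Complex.sub_re, Complex.re_cubic_taylor]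
  · refine (Complex.imCLM.isBigO_comp _ _ |>.neg_left.trans_isLittleO hD).congr_left
      fun φ => ?_
    rw [Complex.imCLM_apply, Complex.sub_im, Complex.im_cubic_taylor]
    ring
end
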